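/- arXiv:math/9607211 — 7 statements merged into one kernel-verified Lean document; each statement's English description precedes it below -/
import Mathlib

section
/- Let X and Y be locally compact Hausdorff spaces, let E and F be real Banach spaces with E nontrivial, and let T : C₀(X,E) → C₀(Y,F) be a linear isometry. Then for every x ∈ X the set Q_x is nonempty; that is, there exist ν in the unit sphere of E*, a point y ∈ Y, and μ in the unit sphere of F* such that S_{x,ν} is nonempty and μ(Tf(y)) = 1 for every f ∈ S_{x,ν}. -/
open ZeroAtInfty

variable {X Y E F : Type*}
  [TopologicalSpace X] [LocallyCompactSpace X] [T2Space X]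
  [TopologicalSpace Y] [LocallyCompactSpace Y] [T2Space Y]
  [NormedAddCommGroup E] [NormedSpace ℝ E] [CompleteSpace E]
  [NormedAddCommGroup F] [NormedSpace ℝ F] [CompleteSpace F]

/-- `S_{x,ν} = {f ∈ C₀(X,E) : ν(f(x)) = ‖f‖ = 1}`. -/
def Sset (x : X) (ν : E →L[ℝ] ℝ) : Set C₀(X, E) :=
  {f | ν (f x) = 1 ∧ ‖f‖ = 1}

/-- `R_{y,μ} = {g ∈ C₀(Y,F) : μ(g(y)) = ‖g‖ = 1}`. -/
def Rset (y : Y) (μ : F →L[ℝ] ℝ) : Set C₀(Y, F) :=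
  {g | μ (g y) = 1 ∧ ‖g‖ = 1}

/-- `Q_{x,ν}`: the set of `y ∈ Y` such that `T(S_{x,ν}) ⊆ R_{y,μ}` for some `μ` in the unit
sphere of `F*`, when `S_{x,ν} ≠ ∅`; empty otherwise. -/
def Qnu (T : C₀(X, E) →ₗᵢ[ℝ] C₀(Y, F)) (x : X) (ν : E →L[ℝ] ℝ) : Set Y :=
  {y | (Sset x ν).Nonempty ∧
    ∃ μ : F →L[ℝ] ℝ, ‖μ‖ = 1 ∧ ∀ f ∈ Sset x ν, T f ∈ Rset y μ}

/-- `Q_x = ⋃_{ν ∈ S_{E*}} Q_{x,ν}`. -/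
def Qset (T : C₀(X, E) →ₗᵢ[ℝ] C₀(Y, F)) (x : X) : Set Y :=
  ⋃ ν ∈ {ν : E →L[ℝ] ℝ | ‖ν‖ = 1}, Qnu T x ν

/-
Fix a norm-one functional `ν` on `E` attained at a unit vector; a bump function at `x` times
that vector shows `S_{x,ν} ≠ ∅`, and `S_{x,ν}` is convex. Its image under `T` is then a convex
set of norm-one functions in `C₀(Y,F)`. For such a set the compact sets `{y : ‖g y‖ ≥ 1}` are
nonempty and directed downwards (where the midpoint of `g` and `h` has norm one, so do `g` and
`h`), so they share a point `y`. The values at `y` form a convex subset of the unit sphere of `F`,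
which Hahn–Banach separates from the open unit ball by a norm-one functional `μ` equal to `1`
on it.
-/

open Filter Metric Set

theorem exists_norm_eq_one_forall_apply_eq_one_of_convex {V : Type*} [NormedAddCommGroup V]
    [NormedSpace ℝ V] {A : Set V} (hA : Convex ℝ A) (hne : A.Nonempty)
    (hA1 : ∀ v ∈ A, ‖v‖ = 1) : ∃ μ : V →L[ℝ] ℝ, ‖μ‖ = 1 ∧ ∀ v ∈ A, μ v = 1 := by
  have hdisj : Disjoint (ball (0 : V) 1) A := disjoint_left.2 fun v hv hvA => by
    rw [mem_ball_zero_iff, hA1 v hvA] at hv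
    exact lt_irrefl _ hv
  obtain ⟨Λ, u, hball, hAu⟩ := geometric_hahn_banach_open (convex_ball 0 1) isOpen_ball hA hdisj
  have hu : 0 < u := by simpa using hball 0 (mem_ball_self one_pos)
  -- the open unit ball is symmetric, so the one-sided bound `Λ < u` on it bounds `|Λ|`
  have hΛ : ‖Λ‖ ≤ u := by
    rw [← Λ.sSup_unit_ball_eq_norm]
    refine csSup_le ((nonempty_ball.2 one_pos).image _) ?_
    rintro - ⟨v, hv, rfl⟩
    have hneg := hball (-v) (by rwa [mem_ball_zero_iff, norm_neg, ← mem_ball_zero_iff])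
    rw [map_neg] at hneg
    exact abs_le.2 ⟨by linarith, (hball v hv).le⟩
  have hle : ∀ v ∈ A, Λ v ≤ u := fun v hv => by
    simpa [hA1 v hv] using (le_abs_self _).trans ((Λ.le_opNorm v).trans
      (mul_le_mul_of_nonneg_right hΛ (norm_nonneg v)))
  obtain ⟨v₀, hv₀⟩ := hne
  refine ⟨u⁻¹ • Λ, le_antisymm ?_ ?_, fun v hv => ?_⟩
  · rw [norm_smul, norm_inv, Real.norm_of_nonneg hu.le]
    exact inv_mul_le_one_of_le₀ hΛ hu.le
  · calc 1 = (u⁻¹ • Λ) v₀ := by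
          rw [smul_apply, (hle v₀ hv₀).antisymm (hAu v₀ hv₀), smul_eq_mul,
            inv_mul_cancel₀ hu.ne']
      _ ≤ ‖u⁻¹ • Λ‖ * ‖v₀‖ := (le_abs_self _).trans ((u⁻¹ • Λ).le_opNorm v₀)
      _ = ‖u⁻¹ • Λ‖ := by rw [hA1 v₀ hv₀, mul_one]
  · rw [smul_apply, (hle v hv).antisymm (hAu v hv), smul_eq_mul,
      inv_mul_cancel₀ hu.ne']

namespace ZeroAtInftyContinuousMap

variable {Z G : Type*} [TopologicalSpace Z] [NormedAddCommGroup G]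

theorem norm_apply_le (g : C₀(Z, G)) (z : Z) : ‖g z‖ ≤ ‖g‖ := by
  rw [← norm_toBCF_eq_norm]
  exact g.toBCF.norm_coe_le_norm z

theorem norm_le_of_forall_le (g : C₀(Z, G)) {C : ℝ} (hC : 0 ≤ C) (h : ∀ z, ‖g z‖ ≤ C) :
    ‖g‖ ≤ C := by
  rw [← norm_toBCF_eq_norm]
  exact (BoundedContinuousFunction.norm_le hC).2 h

theorem isCompact_setOf_le_norm (g : C₀(Z, G)) {c : ℝ} (hc : 0 < c) :
    IsCompact {z | c ≤ ‖g z‖} := by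
  obtain ⟨K, hK, hKc⟩ := mem_cocompact.1 (mem_map.1 (zero_at_infty g (ball_mem_nhds 0 hc)))
  refine hK.of_isClosed_subset (isClosed_le continuous_const g.continuous.norm) fun z hz => ?_
  by_contra hzK
  have : ‖g z‖ < c := mem_ball_zero_iff.1 (hKc hzK)
  exact (not_le.2 this) hz

theorem exists_norm_apply_eq_norm (g : C₀(Z, G)) (hg : 0 < ‖g‖) : ∃ z, ‖g z‖ = ‖g‖ := by
  -- the supremum of `‖g ·‖` is attained on the compact set where `‖g ·‖` is at least `‖g‖ / 2`
  set K := {z | ‖g‖ / 2 ≤ ‖g z‖}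
  obtain ⟨z₁, hz₁⟩ : ∃ z, ‖g‖ / 2 < ‖g z‖ := by
    by_contra! h
    linarith [g.norm_le_of_forall_le (half_pos hg).le h]
  have hK : K.Nonempty := ⟨z₁, hz₁.le⟩
  obtain ⟨z₀, hz₀, hmax⟩ :=
    (g.isCompact_setOf_le_norm (half_pos hg)).exists_isMaxOn hK g.continuous.norm.continuousOn
  refine ⟨z₀, (g.norm_apply_le z₀).antisymm (g.norm_le_of_forall_le (norm_nonneg _) fun z => ?_)⟩
  by_cases hz : z ∈ K
  · exact hmax hz
  · exact (le_of_lt (not_le.1 hz)).trans hz₀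

variable [NormedSpace ℝ G]

theorem isLinearMap_eval (z : Z) : IsLinearMap ℝ fun g : C₀(Z, G) => g z :=
  ⟨fun _ _ => rfl, fun _ _ => rfl⟩

theorem exists_forall_norm_apply_eq_one_of_convex {S : Set C₀(Z, G)} (hS : Convex ℝ S)
    (hne : S.Nonempty) (hS1 : ∀ g ∈ S, ‖g‖ = 1) : ∃ z, ∀ g ∈ S, ‖g z‖ = 1 := by
  have hne' : Nonempty S := hne.to_subtype
  let K : S → Set Z := fun g => {z | 1 ≤ ‖(g : C₀(Z, G)) z‖}
  have hle : ∀ g ∈ S, ∀ z, ‖g z‖ ≤ 1 := fun g hg z => (hS1 g hg) ▸ g.norm_apply_le z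
  have hdir : Directed (· ⊇ ·) K := by
    rintro ⟨g, hg⟩ ⟨h, hh⟩
    have hm : (2⁻¹ : ℝ) • g + (2⁻¹ : ℝ) • h ∈ S :=
      hS hg hh (by norm_num) (by norm_num) (by norm_num)
    have hK : ∀ z ∈ K ⟨_, hm⟩, 1 ≤ ‖g z‖ ∧ 1 ≤ ‖h z‖ := fun z hz => by
      have hz : 1 ≤ ‖(2⁻¹ : ℝ) • g z + (2⁻¹ : ℝ) • h z‖ := hz
      have htri : ‖(2⁻¹ : ℝ) • g z + (2⁻¹ : ℝ) • h z‖ ≤ 2⁻¹ * ‖g z‖ + 2⁻¹ * ‖h z‖ :=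
        (norm_add_le _ _).trans (by simp [norm_smul])
      have hg1 := hle g hg z
      have hh1 := hle h hh z
      exact ⟨by linarith, by linarith⟩
    exact ⟨⟨_, hm⟩, fun z hz => (hK z hz).1, fun z hz => (hK z hz).2⟩
  obtain ⟨z, hz⟩ := IsCompact.nonempty_iInter_of_directed_nonempty_isCompact_isClosed K hdir
    (fun g => let ⟨z, hz⟩ := exists_norm_apply_eq_norm g.1 (by rw [hS1 g.1 g.2]; exact one_pos)
      ⟨z, (hz.trans (hS1 g.1 g.2)).ge⟩)
    (fun g => isCompact_setOf_le_norm g.1 one_pos)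
    (fun g => isClosed_le continuous_const g.1.continuous.norm)
  exact ⟨z, fun g hg => (hle g hg z).antisymm (mem_iInter.1 hz ⟨g, hg⟩)⟩

theorem exists_forall_apply_eq_one_of_convex {S : Set C₀(Z, G)} (hS : Convex ℝ S)
    (hne : S.Nonempty) (hS1 : ∀ g ∈ S, ‖g‖ = 1) :
    ∃ z, ∃ μ : G →L[ℝ] ℝ, ‖μ‖ = 1 ∧ ∀ g ∈ S, μ (g z) = 1 := by
  obtain ⟨z, hz⟩ := exists_forall_norm_apply_eq_one_of_convex hS hne hS1
  obtain ⟨μ, hμ, hμz⟩ := exists_norm_eq_one_forall_apply_eq_one_of_convex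
    (hS.is_linear_image (isLinearMap_eval z)) (hne.image _) (forall_mem_image.2 hz)
  exact ⟨z, μ, hμ, fun g hg => hμz _ (mem_image_of_mem _ hg)⟩

theorem exists_apply_eq_norm_eq [LocallyCompactSpace Z] [T2Space Z] (z : Z) (v : G) :
    ∃ g : C₀(Z, G), g z = v ∧ ‖g‖ = ‖v‖ := by
  obtain ⟨φ, hφz, -, hφc, hφ⟩ := exists_continuous_one_zero_of_isCompact
    (isCompact_singleton (x := z)) isClosed_empty (disjoint_empty _)
  let g : C₀(Z, G) := ⟨⟨fun z => φ z • v, φ.continuous.smul continuous_const⟩,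
    hφc.smul_right.is_zero_at_infty⟩
  have hgz : g z = v := by
    change φ z • v = v
    rw [hφz (mem_singleton z), Pi.one_apply, one_smul]
  refine ⟨g, hgz, le_antisymm (g.norm_le_of_forall_le (norm_nonneg v) fun w => ?_)
    (hgz ▸ g.norm_apply_le z)⟩
  change ‖φ w • v‖ ≤ ‖v‖
  rw [norm_smul, Real.norm_of_nonneg (hφ w).1]
  exact mul_le_of_le_one_left (norm_nonneg v) (hφ w).2

end ZeroAtInftyContinuousMap

section Sset

open ZeroAtInftyContinuousMap

variable {Z G : Type*} [TopologicalSpace Z] [NormedAddCommGroup G] [NormedSpace ℝ G]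

theorem convex_Sset (x : Z) {ν : G →L[ℝ] ℝ} (hν : ‖ν‖ ≤ 1) : Convex ℝ (Sset x ν) := by
  have hS : Sset x ν = {f | ν (f x) = 1} ∩ closedBall 0 1 := by
    ext f
    simp only [Sset, mem_ofPred_eq, mem_inter_iff, mem_closedBall_zero_iff]
    refine ⟨fun h => ⟨h.1, h.2.le⟩, fun ⟨h1, hf⟩ => ⟨h1, hf.antisymm ?_⟩⟩
    calc 1 = ν (f x) := h1.symm
      _ ≤ ‖ν‖ * ‖f x‖ := (le_abs_self _).trans (ν.le_opNorm _)
      _ ≤ 1 * ‖f‖ := mul_le_mul hν (f.norm_apply_le x) (norm_nonneg _) zero_le_one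
      _ = ‖f‖ := one_mul _
  rw [hS]
  exact (convex_hyperplane ⟨fun f g => by simp, fun c f => by simp⟩ 1).inter
    (convex_closedBall 0 1)

theorem exists_norm_eq_one_Sset_nonempty [LocallyCompactSpace Z] [T2Space Z] [Nontrivial G]
    (x : Z) : ∃ ν : G →L[ℝ] ℝ, ‖ν‖ = 1 ∧ (Sset x ν).Nonempty := by
  obtain ⟨e, he⟩ := exists_norm_eq G zero_le_one
  obtain ⟨ν, hν, hνe⟩ := exists_dual_vector ℝ e (by rw [he]; exact one_ne_zero)
  obtain ⟨f, hfx, hf⟩ := exists_apply_eq_norm_eq x e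
  refine ⟨ν, hν, f, ?_, hf.trans he⟩
  rw [hfx, hνe, he]
  rfl

end Sset

/-- Claim 1: `Q_x` is nonempty for all `x` in `X`. -/
theorem Qset_nonempty [Nontrivial E] (T : C₀(X, E) →ₗᵢ[ℝ] C₀(Y, F)) (x : X) :
    (Qset T x).Nonempty ∧
    ∃ ν : E →L[ℝ] ℝ, ‖ν‖ = 1 ∧ ∃ y : Y, ∃ μ : F →L[ℝ] ℝ, ‖μ‖ = 1 ∧
      (Sset x ν).Nonempty ∧ ∀ f ∈ Sset x ν, μ (T f y) = 1 := by
  obtain ⟨ν, hν, hS⟩ := exists_norm_eq_one_Sset_nonempty (G := E) x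
  have hTS : ∀ g ∈ T '' Sset x ν, ‖g‖ = 1 :=
    forall_mem_image.2 fun f hf => by rw [T.norm_map, hf.2]
  obtain ⟨y, μ, hμ, hμT⟩ := ZeroAtInftyContinuousMap.exists_forall_apply_eq_one_of_convex
    ((convex_Sset x hν.le).linear_image T.toLinearMap) (hS.image T) hTS
  have hμS : ∀ f ∈ Sset x ν, μ (T f y) = 1 := fun f hf => hμT _ (mem_image_of_mem T hf)
  have hy : y ∈ Qnu T x ν :=
    ⟨hS, μ, hμ, fun f hf => ⟨hμS f hf, hTS _ (mem_image_of_mem T hf)⟩⟩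
  exact ⟨⟨y, mem_biUnion hν hy⟩, ν, hν, y, μ, hμ, hS, hμS⟩
end

section
/- Let X and Y be locally compact Hausdorff spaces, let E and F be real Banach spaces, and let T : C₀(X,E) → C₀(Y,F) be a linear isometry. Fix x ∈ X and ν in the unit sphere of E*, and let f₁, …, fₙ ∈ C₀(X,E) satisfy ν(fᵢ(x)) = ‖fᵢ‖ = 1 for i = 1, …, n. Then there exist y ∈ Y and μ in the unit sphere of F* such that μ(Tfᵢ(y)) = 1 for i = 1, …, n. -/
open ZeroAtInfty

/-! The sum `g = ∑ fᵢ` has norm `n`, witnessed by `ν (g x) = n`. Its isometric image `T g` attains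
its norm at some `y`, where a norm-one functional `μ` norms `T g y`. Then `∑ μ (T fᵢ y) = n` with
every term at most `‖T fᵢ‖ = 1`, so every term equals `1`. For `n = 0` one still needs `Y` nonempty
and `F ≠ 0`; this holds because `C₀(X, E) ≠ 0` and `T` is injective. -/

namespace ZeroAtInftyContinuousMap

variable {α β : Type*} [TopologicalSpace α] [NormedAddCommGroup β]

theorem norm_apply_le_s2 (f : C₀(α, β)) (x : α) : ‖f x‖ ≤ ‖f‖ := by
  rw [← norm_toBCF_eq_norm]
  exact f.toBCF.norm_coe_le_norm x

theorem exists_norm_apply_eq [Nonempty α] (f : C₀(α, β)) : ∃ x, ‖f x‖ = ‖f‖ := by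
  rcases eq_or_ne f 0 with rfl | hf
  · exact ⟨Classical.arbitrary α, by simp⟩
  obtain ⟨x₀, hx₀⟩ := DFunLike.ne_iff.1 hf
  have hcocompact : ∀ᶠ x in Filter.cocompact α, ‖f x‖ ≤ ‖f x₀‖ := by
    simpa using f.zero_at_infty'.norm.eventually_le_const (u := ‖f x₀‖) (by simpa using hx₀)
  obtain ⟨x, hx⟩ := f.continuous.norm.exists_forall_ge' x₀ hcocompact
  refine ⟨x, (f.norm_apply_le_s2 x).antisymm ?_⟩
  rw [← norm_toBCF_eq_norm]
  exact (BoundedContinuousFunction.norm_le (norm_nonneg _)).2 hx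

instance [LocallyCompactSpace α] [RegularSpace α] [Nonempty α] [NormedSpace ℝ β] [Nontrivial β] :
    Nontrivial C₀(α, β) := by
  obtain ⟨x⟩ := ‹Nonempty α›
  obtain ⟨v, hv⟩ := exists_ne (0 : β)
  obtain ⟨φ, hφx, -, hφ, -⟩ := exists_continuous_one_zero_of_isCompact
    (isCompact_singleton (x := x)) isClosed_empty (Set.disjoint_empty _)
  let bump : C₀(α, β) :=
    ⟨⟨fun z => φ z • v, φ.continuous.smul continuous_const⟩, hφ.smul_right.is_zero_at_infty⟩
  refine nontrivial_of_ne bump 0 (DFunLike.ne_iff.2 ⟨x, ?_⟩)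
  simpa [bump, hφx rfl] using hv

variable (𝕜 : Type*) [NontriviallyNormedField 𝕜] [NormedSpace 𝕜 β]

noncomputable def evalCLM (x : α) : C₀(α, β) →L[𝕜] β :=
  LinearMap.mkContinuous
    { toFun := fun f => f x, map_add' := fun _ _ => rfl, map_smul' := fun _ _ => rfl } 1
    fun f => by simpa using f.norm_apply_le_s2 x

@[simp]
theorem evalCLM_apply (x : α) (f : C₀(α, β)) : evalCLM 𝕜 x f = f x := rfl

theorem norm_evalCLM_le (x : α) : ‖(evalCLM 𝕜 x : C₀(α, β) →L[𝕜] β)‖ ≤ 1 :=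
  LinearMap.mkContinuous_norm_le _ zero_le_one _

theorem norm_comp_evalCLM_le {γ : Type*} [SeminormedAddCommGroup γ] [NormedSpace 𝕜 γ]
    (ψ : β →L[𝕜] γ) (x : α) : ‖ψ.comp (evalCLM 𝕜 x : C₀(α, β) →L[𝕜] β)‖ ≤ ‖ψ‖ :=
  (ψ.opNorm_comp_le _).trans (mul_le_of_le_one_right (norm_nonneg ψ) (norm_evalCLM_le 𝕜 x))

end ZeroAtInftyContinuousMap

section NormingFunctional

variable {V ι : Type*} [SeminormedAddCommGroup V] [NormedSpace ℝ V]
  {ψ : V →L[ℝ] ℝ} {s : Finset ι} {v : ι → V}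

theorem ContinuousLinearMap.apply_le_norm_of_norm_le_one (hψ : ‖ψ‖ ≤ 1) (w : V) : ψ w ≤ ‖w‖ :=
  (le_abs_self _).trans (by simpa using ψ.le_of_opNorm_le hψ w)

theorem apply_sum_eq_sum_norm_iff (hψ : ‖ψ‖ ≤ 1) :
    ψ (∑ i ∈ s, v i) = ∑ i ∈ s, ‖v i‖ ↔ ∀ i ∈ s, ψ (v i) = ‖v i‖ := by
  rw [map_sum]
  exact Finset.sum_eq_sum_iff_of_le fun i _ => ψ.apply_le_norm_of_norm_le_one hψ (v i)

theorem norm_sum_eq_sum_norm_of_apply_eq (hψ : ‖ψ‖ ≤ 1) (h : ∀ i ∈ s, ψ (v i) = ‖v i‖) :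
    ‖∑ i ∈ s, v i‖ = ∑ i ∈ s, ‖v i‖ :=
  (norm_sum_le s v).antisymm <| calc
    ∑ i ∈ s, ‖v i‖ = ψ (∑ i ∈ s, v i) := ((apply_sum_eq_sum_norm_iff hψ).2 h).symm
    _ ≤ ‖∑ i ∈ s, v i‖ := ψ.apply_le_norm_of_norm_le_one hψ _

end NormingFunctional

theorem exists_norming_point_and_functional_general
    {X Y E F : Type*}
    [TopologicalSpace X] [LocallyCompactSpace X] [T2Space X]
    [TopologicalSpace Y]
    [NormedAddCommGroup E] [NormedSpace ℝ E]
    [NormedAddCommGroup F] [NormedSpace ℝ F]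
    (T : C₀(X, E) →ₗᵢ[ℝ] C₀(Y, F)) (x : X) (ν : E →L[ℝ] ℝ) (hν : ‖ν‖ = 1)
    (n : ℕ) (f : Fin n → C₀(X, E)) (hf : ∀ i, ν (f i x) = 1 ∧ ‖f i‖ = 1) :
    ∃ (y : Y) (μ : F →L[ℝ] ℝ), ‖μ‖ = 1 ∧ ∀ i, μ (T (f i) y) = 1 := by
  have : Nonempty X := ⟨x⟩
  have : Nontrivial E := by
    by_contra h
    rw [not_nontrivial_iff_subsingleton] at h
    simp [Subsingleton.elim ν 0] at hν
  have : Nontrivial C₀(Y, F) := T.injective.nontrivial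
  obtain ⟨g, hg⟩ := exists_ne (0 : C₀(Y, F))
  obtain ⟨y₀, hy₀⟩ := DFunLike.ne_iff.1 hg
  have : Nonempty Y := ⟨y₀⟩
  have : Nontrivial F := nontrivial_of_ne _ _ hy₀
  have hnorm_sum : ‖∑ i, T (f i)‖ = ∑ i, ‖T (f i)‖ := by
    simp only [← map_sum, LinearIsometry.norm_map]
    refine norm_sum_eq_sum_norm_of_apply_eq
      ((ZeroAtInftyContinuousMap.norm_comp_evalCLM_le ℝ ν x).trans hν.le) fun i _ => ?_
    simp [hf i]
  obtain ⟨y, hy⟩ := (∑ i, T (f i)).exists_norm_apply_eq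
  obtain ⟨μ, hμ, hμy⟩ := exists_dual_vector' ℝ ((∑ i, T (f i)) y)
  have hμ_le := (ZeroAtInftyContinuousMap.norm_comp_evalCLM_le ℝ μ y).trans hμ.le
  have hμ_sum :
      μ.comp (ZeroAtInftyContinuousMap.evalCLM ℝ y) (∑ i, T (f i)) = ∑ i, ‖T (f i)‖ := by
    rw [ContinuousLinearMap.comp_apply, ZeroAtInftyContinuousMap.evalCLM_apply, hμy, hy, hnorm_sum]
    rfl
  refine ⟨y, μ, hμ, fun i => ?_⟩
  simpa [hf i] using (apply_sum_eq_sum_norm_iff hμ_le).1 hμ_sum i (Finset.mem_univ i)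

/-- The finite-intersection step in the proof of Claim 1: given finitely many functions
`f₁, …, fₙ` with `ν(fᵢ(x)) = ‖fᵢ‖ = 1`, there are `y ∈ Y` and `μ` in the unit sphere of `F*`
with `μ(Tfᵢ(y)) = 1` for all `i`. -/
theorem exists_norming_point_and_functional
    {X Y E F : Type*}
    [TopologicalSpace X] [LocallyCompactSpace X] [T2Space X]
    [TopologicalSpace Y] [LocallyCompactSpace Y] [T2Space Y]
    [NormedAddCommGroup E] [NormedSpace ℝ E] [CompleteSpace E]
    [NormedAddCommGroup F] [NormedSpace ℝ F] [CompleteSpace F]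
    (T : C₀(X, E) →ₗᵢ[ℝ] C₀(Y, F)) (x : X) (ν : E →L[ℝ] ℝ) (hν : ‖ν‖ = 1)
    (n : ℕ) (f : Fin n → C₀(X, E)) (hf : ∀ i, ν (f i x) = 1 ∧ ‖f i‖ = 1) :
    ∃ (y : Y) (μ : F →L[ℝ] ℝ), ‖μ‖ = 1 ∧ ∀ i, μ (T (f i) y) = 1 :=
  exists_norming_point_and_functional_general T x ν hν n f hf
end

section
/- Let X and Y be locally compact Hausdorff spaces, let E and F be real Banach spaces with F strictly convex, and let T : C₀(X,E) → C₀(Y,F) be a linear isometry. Then for distinct points x₁ ≠ x₂ in X, the sets Q_{x₁} and Q_{x₂} are disjoint. -/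
open ZeroAtInfty

variable {X Y E F : Type*}
  [TopologicalSpace X] [LocallyCompactSpace X] [T2Space X]
  [TopologicalSpace Y] [LocallyCompactSpace Y] [T2Space Y]
  [NormedAddCommGroup E] [NormedSpace ℝ E] [CompleteSpace E]
  [NormedAddCommGroup F] [NormedSpace ℝ F] [CompleteSpace F]

/-- Multiplying a `C₀` function by a continuous scalar function with `|φ| ≤ 1`. -/
noncomputable def cmul (φ : C(X, ℝ)) (hφ : ∀ x, ‖φ x‖ ≤ 1) (f : C₀(X, E)) : C₀(X, E) where
  toFun := fun x => φ x • f x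
  continuous_toFun := φ.continuous.smul (map_continuous f)
  zero_at_infty' := by
    have hf : Filter.Tendsto (fun x => ‖f x‖) (Filter.cocompact X) (nhds 0) :=
      tendsto_zero_iff_norm_tendsto_zero.mp f.zero_at_infty'
    refine squeeze_zero_norm (fun x => ?_) hf
    rw [norm_smul]
    calc ‖φ x‖ * ‖f x‖ ≤ 1 * ‖f x‖ := by
          exact mul_le_mul_of_nonneg_right (hφ x) (norm_nonneg _)
      _ = ‖f x‖ := one_mul _

@[simp] lemma cmul_apply (φ : C(X, ℝ)) (hφ : ∀ x, ‖φ x‖ ≤ 1) (f : C₀(X, E)) (x : X) :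
    cmul φ hφ f x = φ x • f x := rfl

lemma C0.norm_apply_le (f : C₀(X, E)) (x : X) : ‖f x‖ ≤ ‖f‖ := by
  rw [← ZeroAtInftyContinuousMap.norm_toBCF_eq_norm]
  exact f.toBCF.norm_coe_le_norm x

lemma C0.norm_le_one (f : C₀(X, E)) (h : ∀ x, ‖f x‖ ≤ 1) : ‖f‖ ≤ 1 := by
  rw [← ZeroAtInftyContinuousMap.norm_toBCF_eq_norm]
  exact (BoundedContinuousFunction.norm_le zero_le_one).mpr h

/-- If a norm-one functional attains `1` at `f x` and `‖f‖ ≤ 1`, then `‖f‖ = 1`. -/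
lemma C0.norm_eq_one {f : C₀(X, E)} {x : X} {ν : E →L[ℝ] ℝ} (hν : ‖ν‖ = 1)
    (hval : ν (f x) = 1) (hle : ‖f‖ ≤ 1) : ‖f‖ = 1 := by
  refine le_antisymm hle ?_
  have := ν.le_opNorm (f x)
  rw [hν, one_mul] at this
  have h1 : (1 : ℝ) ≤ ‖f x‖ := by
    calc (1 : ℝ) = ν (f x) := hval.symm
    _ ≤ ‖ν (f x)‖ := le_abs_self _
    _ ≤ ‖f x‖ := this
  exact h1.trans (C0.norm_apply_le f x)

/-- Claim 2: `Q_{x₁} ∩ Q_{x₂} = ∅` if `x₁ ≠ x₂`. -/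
theorem Qset_disjoint [StrictConvexSpace ℝ F]
    (T : C₀(X, E) →ₗᵢ[ℝ] C₀(Y, F)) {x₁ x₂ : X} (hx : x₁ ≠ x₂) :
    Disjoint (Qset T x₁) (Qset T x₂) := by
  rw [Set.disjoint_left]
  rintro y hy1 hy2
  simp only [Qset, Set.mem_iUnion, Set.mem_setOf_eq] at hy1 hy2
  obtain ⟨ν₁, hν₁, hne₁, μ₁, hμ₁, hT₁⟩ := hy1
  obtain ⟨ν₂, hν₂, hne₂, μ₂, hμ₂, hT₂⟩ := hy2
  obtain ⟨f₁, hf₁ν, hf₁n⟩ := hne₁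
  obtain ⟨g₂, hg₂ν, hg₂n⟩ := hne₂
  -- Urysohn-type function: φ = 0 at x₂, φ = 1 at x₁, 0 ≤ φ ≤ 1
  obtain ⟨φ, hφ0, hφ1, hφI⟩ :=
    exists_continuous_zero_one_of_isCompact (isCompact_singleton : IsCompact {x₂})
      (isClosed_singleton : IsClosed ({x₁} : Set X))
      (by simpa [Set.disjoint_singleton] using hx.symm)
  have hφx₁ : φ x₁ = 1 := hφ1 rfl
  have hφx₂ : φ x₂ = 0 := hφ0 rfl
  have hφb : ∀ x, ‖φ x‖ ≤ 1 := fun x => by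
    rw [Real.norm_eq_abs, abs_le]; exact ⟨by linarith [(hφI x).1], (hφI x).2⟩
  set ψ : C(X, ℝ) := 1 - φ with hψdef
  have hψ_apply : ∀ x, ψ x = 1 - φ x := fun x => rfl
  have hψb : ∀ x, ‖ψ x‖ ≤ 1 := fun x => by
    rw [hψ_apply, Real.norm_eq_abs, abs_le]
    exact ⟨by linarith [(hφI x).2], by linarith [(hφI x).1]⟩
  set u : C₀(X, E) := cmul φ hφb f₁ with hu
  set h : C₀(X, E) := cmul ψ hψb g₂ with hh
  have hux₁ : u x₁ = f₁ x₁ := by simp [hu, hφx₁]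
  have hux₂ : u x₂ = 0 := by simp [hu, hφx₂]
  have hhx₁ : h x₁ = 0 := by simp [hh, hψ_apply, hφx₁]
  have hhx₂ : h x₂ = g₂ x₂ := by simp [hh, hψ_apply, hφx₂]
  have hf₁le : ∀ x, ‖f₁ x‖ ≤ 1 := fun x => by
    simpa [hf₁n] using C0.norm_apply_le f₁ x
  have hg₂le : ∀ x, ‖g₂ x‖ ≤ 1 := fun x => by
    simpa [hg₂n] using C0.norm_apply_le g₂ x
  have hu_le : ‖u‖ ≤ 1 := by
    refine C0.norm_le_one _ fun x => ?_
    rw [hu, cmul_apply, norm_smul]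
    calc ‖φ x‖ * ‖f₁ x‖ ≤ 1 * 1 :=
          mul_le_mul (hφb x) (hf₁le x) (norm_nonneg _) zero_le_one
      _ = 1 := one_mul 1
  have hh_le : ‖h‖ ≤ 1 := by
    refine C0.norm_le_one _ fun x => ?_
    rw [hh, cmul_apply, norm_smul]
    calc ‖ψ x‖ * ‖g₂ x‖ ≤ 1 * 1 :=
          mul_le_mul (hψb x) (hg₂le x) (norm_nonneg _) zero_le_one
      _ = 1 := one_mul 1
  have hs_le : ‖u + h‖ ≤ 1 := by
    refine C0.norm_le_one _ fun x => ?_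
    have : (u + h) x = φ x • f₁ x + ψ x • g₂ x := rfl
    rw [this]
    calc ‖φ x • f₁ x + ψ x • g₂ x‖ ≤ ‖φ x • f₁ x‖ + ‖ψ x • g₂ x‖ := norm_add_le _ _
      _ = ‖φ x‖ * ‖f₁ x‖ + ‖ψ x‖ * ‖g₂ x‖ := by rw [norm_smul, norm_smul]
      _ ≤ 1 := by
          rw [hψ_apply, Real.norm_eq_abs, Real.norm_eq_abs,
            abs_of_nonneg (hφI x).1,
            abs_of_nonneg (show (0:ℝ) ≤ 1 - φ x by linarith [(hφI x).2])]
          nlinarith [hf₁le x, hg₂le x, (hφI x).1, (hφI x).2,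
            norm_nonneg (f₁ x), norm_nonneg (g₂ x)]
  -- memberships
  have hu_mem : u ∈ Sset x₁ ν₁ := by
    have hval : ν₁ (u x₁) = 1 := by rw [hux₁]; exact hf₁ν
    exact ⟨hval, C0.norm_eq_one hν₁ hval hu_le⟩
  have hs_mem : u + h ∈ Sset x₁ ν₁ := by
    have hval : ν₁ ((u + h) x₁) = 1 := by
      have : (u + h) x₁ = u x₁ + h x₁ := rfl
      rw [this, hux₁, hhx₁, add_zero]; exact hf₁ν
    exact ⟨hval, C0.norm_eq_one hν₁ hval hs_le⟩
  have hh_mem : h ∈ Sset x₂ ν₂ := by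
    have hval : ν₂ (h x₂) = 1 := by rw [hhx₂]; exact hg₂ν
    exact ⟨hval, C0.norm_eq_one hν₂ hval hh_le⟩
  obtain ⟨hTu1, hTun⟩ := hT₁ u hu_mem
  obtain ⟨hTs1, hTsn⟩ := hT₁ (u + h) hs_mem
  obtain ⟨hTh1, hThn⟩ := hT₂ h hh_mem
  -- norms of the values at y
  have hnorm_val : ∀ (g : C₀(Y, F)), ‖g‖ = 1 → μ₁ (g y) = 1 → ‖g y‖ = 1 := by
    intro g hg hval
    refine le_antisymm (by simpa [hg] using C0.norm_apply_le g y) ?_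
    have := μ₁.le_opNorm (g y)
    rw [hμ₁, one_mul] at this
    calc (1 : ℝ) = μ₁ (g y) := hval.symm
      _ ≤ ‖μ₁ (g y)‖ := le_abs_self _
      _ ≤ ‖g y‖ := this
  have ha : ‖(T u) y‖ = 1 := hnorm_val _ hTun hTu1
  have hc : ‖(T (u + h)) y‖ = 1 := hnorm_val _ hTsn hTs1
  -- strict convexity forces the two values to coincide
  have hsum : ‖(T u) y + (T (u + h)) y‖ = ‖(T u) y‖ + ‖(T (u + h)) y‖ := by
    rw [ha, hc]
    refine le_antisymm ?_ ?_
    · calc ‖(T u) y + (T (u + h)) y‖ ≤ ‖(T u) y‖ + ‖(T (u + h)) y‖ := norm_add_le _ _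
        _ = 1 + 1 := by rw [ha, hc]
    have hval : μ₁ ((T u) y + (T (u + h)) y) = 2 := by
      rw [map_add, hTu1, hTs1]; norm_num
    have := μ₁.le_opNorm ((T u) y + (T (u + h)) y)
    rw [hμ₁, one_mul] at this
    calc (1 : ℝ) + 1 = 2 := by norm_num
      _ = μ₁ ((T u) y + (T (u + h)) y) := hval.symm
      _ ≤ ‖μ₁ ((T u) y + (T (u + h)) y)‖ := le_abs_self _
      _ ≤ ‖(T u) y + (T (u + h)) y‖ := this
  have heq : (T u) y = (T (u + h)) y :=
    eq_of_norm_eq_of_norm_add_eq (ha.trans hc.symm) hsum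
  -- hence (T h) y = 0, contradicting μ₂ ((T h) y) = 1
  have hTadd : T (u + h) = T u + T h := map_add T u h
  have hzero : (T h) y = 0 := by
    have heval : (T (u + h)) y = (T u) y + (T h) y := by rw [hTadd]; rfl
    rw [heval] at heq
    exact (left_eq_add.mp heq)
  rw [hzero] at hTh1
  simp at hTh1
end

section
/- Let X and Y be locally compact Hausdorff spaces, let E and F be real Banach spaces with F strictly convex, and let T : C₀(X,E) → C₀(Y,F) be a linear isometry. If x ∈ X, y ∈ Q_x, and f ∈ C₀(X,E) satisfies x ∉ supp f (the closure of {w ∈ X : f(w) ≠ 0}), then Tf(y) = 0. -/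
open ZeroAtInfty

variable {X Y E F : Type*}
  [TopologicalSpace X] [LocallyCompactSpace X] [T2Space X]
  [TopologicalSpace Y] [LocallyCompactSpace Y] [T2Space Y]
  [NormedAddCommGroup E] [NormedSpace ℝ E] [CompleteSpace E]
  [NormedAddCommGroup F] [NormedSpace ℝ F] [CompleteSpace F]

lemma C0_norm_le {α β : Type*} [TopologicalSpace α] [SeminormedAddCommGroup β]
    {f : C₀(α, β)} {C : ℝ} (hC : 0 ≤ C) (h : ∀ a, ‖f a‖ ≤ C) : ‖f‖ ≤ C := by
  rw [← ZeroAtInftyContinuousMap.norm_toBCF_eq_norm]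
  exact (BoundedContinuousFunction.norm_le hC).2 h

lemma C0_norm_apply_le {α β : Type*} [TopologicalSpace α] [SeminormedAddCommGroup β]
    (f : C₀(α, β)) (a : α) : ‖f a‖ ≤ ‖f‖ := by
  rw [← ZeroAtInftyContinuousMap.norm_toBCF_eq_norm]
  exact BoundedContinuousFunction.norm_coe_le_norm f.toBCF a

/-- Claim 3: if `y ∈ Q_x` and `x ∉ supp f`, then `Tf(y) = 0`. -/
theorem apply_eq_zero_of_not_mem_tsupport [StrictConvexSpace ℝ F]
    (T : C₀(X, E) →ₗᵢ[ℝ] C₀(Y, F)) {x : X} {y : Y} (hy : y ∈ Qset T x)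
    {f : C₀(X, E)} (hf : x ∉ tsupport ⇑f) :
    T f y = 0 := by
  classical
  simp only [Qset, Set.mem_iUnion, Set.mem_setOf_eq] at hy
  obtain ⟨ν, hν, hSne, μ, hμ, hT⟩ := hy
  obtain ⟨g, hg1, hg2⟩ := hSne
  -- Urysohn function `u` : 1 at x, 0 on tsupport f
  obtain ⟨u, hu1, hu0, -, hu01⟩ :=
    exists_continuous_one_zero_of_isCompact (isCompact_singleton (x := x))
      (isClosed_tsupport ⇑f) (Set.disjoint_singleton_left.mpr hf)
  have hfx : f x = 0 := image_eq_zero_of_notMem_tsupport hf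
  have hub : ∀ w, ‖u w • g w‖ ≤ ‖g w‖ := by
    intro w
    rw [norm_smul, Real.norm_eq_abs]
    have h1 := (hu01 w).1
    have h2 := (hu01 w).2
    nlinarith [norm_nonneg (g w), abs_le.mpr ⟨by linarith, h2⟩]
  -- the function h = u • g
  set h : C₀(X, E) :=
    ⟨⟨fun w => u w • g w, u.continuous.smul (map_continuous g)⟩, by
      refine squeeze_zero_norm hub ?_
      simpa using (zero_at_infty g).norm⟩ with hhdef
  have happly : ∀ w, h w = u w • g w := fun w => rfl
  have hhx : h x = g x := by rw [happly, hu1 rfl, Pi.one_apply, one_smul]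
  have hh0 : ∀ w ∈ tsupport ⇑f, h w = 0 := by
    intro w hw
    rw [happly, hu0 hw, Pi.zero_apply, zero_smul]
  have hnormh : ∀ w, ‖h w‖ ≤ 1 := fun w => (hub w).trans (hg2 ▸ C0_norm_apply_le g w)
  -- the scaled f
  set c : ℝ := (‖f‖ + 1)⁻¹ with hc
  have hcpos : 0 < c := by positivity
  have hfc : ∀ w, ‖c • f w‖ ≤ 1 := by
    intro w
    rw [norm_smul, Real.norm_eq_abs, abs_of_pos hcpos]
    have : ‖f w‖ ≤ ‖f‖ := C0_norm_apply_le f w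
    rw [hc, inv_mul_le_iff₀ (by positivity)]
    linarith
  -- membership in Sset
  have memS : ∀ s : ℝ, |s| ≤ 1 → h + (s * c) • f ∈ Sset x ν := by
    intro s hs
    have hval : ν ((h + (s * c) • f) x) = 1 := by
      simp only [ZeroAtInftyContinuousMap.add_apply, ZeroAtInftyContinuousMap.smul_apply,
        hfx, smul_zero, add_zero, hhx, hg1]
    constructor
    · exact hval
    · have hle : ‖h + (s * c) • f‖ ≤ 1 := by
        refine C0_norm_le zero_le_one ?_
        intro w
        rcases em (w ∈ tsupport ⇑f) with hw | hw
        · have : h w = 0 := hh0 w hw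
          simp only [ZeroAtInftyContinuousMap.add_apply, ZeroAtInftyContinuousMap.smul_apply,
            this, zero_add]
          rw [mul_smul, norm_smul, Real.norm_eq_abs]
          calc |s| * ‖c • f w‖ ≤ 1 * 1 :=
                mul_le_mul hs (hfc w) (norm_nonneg _) zero_le_one
            _ = 1 := one_mul 1
        · have : f w = 0 := image_eq_zero_of_notMem_tsupport hw
          simp only [ZeroAtInftyContinuousMap.add_apply, ZeroAtInftyContinuousMap.smul_apply,
            this, smul_zero, add_zero]
          exact hnormh w
      have hge : (1 : ℝ) ≤ ‖h + (s * c) • f‖ := by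
        calc (1 : ℝ) = ν ((h + (s * c) • f) x) := hval.symm
          _ ≤ ‖ν ((h + (s * c) • f) x)‖ := le_abs_self _
          _ ≤ ‖ν‖ * ‖(h + (s * c) • f) x‖ := ν.le_opNorm _
          _ = ‖(h + (s * c) • f) x‖ := by rw [hν, one_mul]
          _ ≤ ‖h + (s * c) • f‖ := C0_norm_apply_le _ _
      linarith
  -- apply T and use Rset membership
  have habs : ∀ k : C₀(X, E), k ∈ Sset x ν → ‖T k y‖ = 1 ∧ μ (T k y) = 1 := by
    intro k hk
    obtain ⟨hμk, hnk⟩ := hT k hk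
    refine ⟨le_antisymm (hnk ▸ C0_norm_apply_le (T k) y) ?_, hμk⟩
    calc (1 : ℝ) = μ (T k y) := hμk.symm
      _ ≤ ‖μ (T k y)‖ := le_abs_self _
      _ ≤ ‖μ‖ * ‖T k y‖ := μ.le_opNorm _
      _ = ‖T k y‖ := by rw [hμ, one_mul]
  have hp := habs _ (memS 1 (by norm_num))
  have hm := habs _ (memS (-1) (by norm_num))
  have hTp : T (h + (1 * c) • f) y = T h y + c • T f y := by
    rw [map_add, map_smul]
    simp [one_mul]
  have hTm : T (h + ((-1) * c) • f) y = T h y - c • T f y := by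
    rw [map_add, map_smul]
    simp [neg_mul, neg_smul, sub_eq_add_neg]
  rw [hTp] at hp
  rw [hTm] at hm
  set a := T h y
  set v := c • T f y
  have hsum : ‖(a + v) + (a - v)‖ = ‖a + v‖ + ‖a - v‖ := by
    have ha : ‖a‖ = 1 := (habs _ (by simpa using memS 0 (by norm_num))).1
    have : (a + v) + (a - v) = (2 : ℝ) • a := by module
    rw [this, norm_smul, ha, hp.1, hm.1]
    norm_num
  have heq : a + v = a - v :=
    eq_of_norm_eq_of_norm_add_eq (by rw [hp.1, hm.1]) hsum
  have hv : v = 0 := by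
    have : (2 : ℝ) • v = 0 := by
      have := sub_eq_zero.mpr heq
      rw [show (a + v) - (a - v) = (2 : ℝ) • v by module] at this
      exact this
    simpa using (smul_eq_zero.mp this).resolve_left (by norm_num)
  have := smul_eq_zero.mp hv
  rcases this with h1 | h2
  · exact absurd h1 (ne_of_gt hcpos)
  · exact h2
end

section
/- Let X and Y be locally compact Hausdorff spaces, let E and F be real Banach spaces with F strictly convex, and let T : C₀(X,E) → C₀(Y,F) be a linear isometry. If x ∈ X, y ∈ Q_x, and f ∈ C₀(X,E) satisfies f(x) = 0, then Tf(y) = 0. -/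
open ZeroAtInfty

variable {X Y E F : Type*}
  [TopologicalSpace X] [LocallyCompactSpace X] [T2Space X]
  [TopologicalSpace Y] [LocallyCompactSpace Y] [T2Space Y]
  [NormedAddCommGroup E] [NormedSpace ℝ E] [CompleteSpace E]
  [NormedAddCommGroup F] [NormedSpace ℝ F] [CompleteSpace F]

lemma c0_apply_le {Z G : Type*} [TopologicalSpace Z] [SeminormedAddCommGroup G]
    (f : C₀(Z, G)) (z : Z) : ‖f z‖ ≤ ‖f‖ := by
  rw [← ZeroAtInftyContinuousMap.norm_toBCF_eq_norm]
  exact BoundedContinuousFunction.norm_coe_le_norm f.toBCF z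

lemma c0_norm_le {Z G : Type*} [TopologicalSpace Z] [SeminormedAddCommGroup G]
    {f : C₀(Z, G)} {C : ℝ} (hC : 0 ≤ C) (h : ∀ z, ‖f z‖ ≤ C) : ‖f‖ ≤ C := by
  rw [← ZeroAtInftyContinuousMap.norm_toBCF_eq_norm]
  exact (BoundedContinuousFunction.norm_le hC).mpr h

/-- If `y ∈ Q_x` and `f(x) = 0`, then `Tf(y) = 0`. -/
theorem apply_eq_zero_of_vanish [StrictConvexSpace ℝ F]
    (T : C₀(X, E) →ₗᵢ[ℝ] C₀(Y, F)) {x : X} {y : Y} (hy : y ∈ Qset T x)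
    {f : C₀(X, E)} (hf : f x = 0) :
    T f y = 0 := by
  simp only [Qset, Set.mem_iUnion, Set.mem_setOf_eq] at hy
  obtain ⟨ν, hν, hSne, μ, hμn, hμ⟩ := hy
  obtain ⟨g₀, hg₀ν, hg₀n⟩ := hSne
  set e := g₀ x with he
  have hνe : ν e = 1 := hg₀ν
  have hen : ‖e‖ = 1 := by
    refine le_antisymm (hg₀n ▸ c0_apply_le g₀ x) ?_
    have h1 := ν.le_opNorm e
    rw [hν, one_mul] at h1
    calc (1 : ℝ) = ‖ν e‖ := by rw [hνe]; simp
    _ ≤ ‖e‖ := h1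
  have key : ∀ ε : ℝ, 0 < ε → ‖T f y‖ ≤ ε := by
    intro ε hε
    set U : Set X := {z : X | ‖f z‖ < ε} with hU
    have hUopen : IsOpen U := isOpen_lt ((map_continuous f).norm) continuous_const
    have hxU : x ∈ U := by simp [hU, hf, hε]
    obtain ⟨K, hKc, hxK, hKU⟩ := exists_compact_subset hUopen hxU
    obtain ⟨u, hu1, hu0, huc, hu01⟩ :=
      exists_continuous_one_zero_of_isCompact hKc hUopen.isClosed_compl
        (Set.disjoint_left.mpr fun z hz hz' => hz' (hKU hz))
    obtain ⟨w, hw1, hw0, hwc, hw01⟩ :=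
      exists_continuous_one_zero_of_isCompact (isCompact_singleton (x := x))
        (isOpen_interior (s := K)).isClosed_compl
        (Set.disjoint_left.mpr fun z hz hz' => by
          rw [Set.mem_singleton_iff] at hz; exact hz' (hz ▸ hxK))
    have hwx : w x = 1 := hw1 rfl
    set g : C₀(X, E) := ⟨⟨fun z => w z • e, (map_continuous w).smul continuous_const⟩, by
      simpa using (hwc.is_zero_at_infty).smul_const e⟩ with hgdef
    have hgz : ∀ z, g z = w z • e := fun z => rfl
    set m : C₀(X, E) := ⟨⟨fun z => u z • f z, (map_continuous u).smul (map_continuous f)⟩, by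
      apply squeeze_zero_norm (a := fun z => ‖f z‖)
      · intro z
        rw [norm_smul]
        calc ‖u z‖ * ‖f z‖ ≤ 1 * ‖f z‖ := by
              refine mul_le_mul_of_nonneg_right ?_ (norm_nonneg _)
              rw [Real.norm_eq_abs, abs_le]
              exact ⟨by linarith [(hu01 z).1], (hu01 z).2⟩
          _ = ‖f z‖ := one_mul _
      · simpa using (zero_at_infty f).norm⟩ with hmdef
    have hmz : ∀ z, m z = u z • f z := fun z => rfl
    set f₁ : C₀(X, E) := f - m with hf₁def
    have hf₁z : ∀ z, f₁ z = f z - u z • f z := fun z => rfl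
    have hf₁K : ∀ z ∈ K, f₁ z = 0 := by
      intro z hz
      rw [hf₁z, hu1 hz]
      simp
    have hf₁x : f₁ x = 0 := by rw [hf₁z, hf]; simp
    have hgK : ∀ z, z ∉ K → g z = 0 := by
      intro z hz
      rw [hgz, hw0 (fun h => hz (interior_subset h))]
      simp
    set t : ℝ := (‖f₁‖ + 1)⁻¹ with ht
    have hpos : (0 : ℝ) < ‖f₁‖ + 1 := by positivity
    have ht0 : 0 < t := inv_pos.mpr hpos
    -- membership in Sset for g + c • f₁ whenever |c| ≤ t
    have hS : ∀ c : ℝ, |c| ≤ t → g + c • f₁ ∈ Sset x ν := by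
      intro c hc
      have hcb : |c| * ‖f₁‖ ≤ 1 := by
        have h1 : |c| * ‖f₁‖ ≤ t * ‖f₁‖ :=
          mul_le_mul_of_nonneg_right hc (norm_nonneg _)
        have h2 : t * ‖f₁‖ ≤ t * (‖f₁‖ + 1) :=
          mul_le_mul_of_nonneg_left (by linarith) ht0.le
        have h3 : t * (‖f₁‖ + 1) = 1 := inv_mul_cancel₀ hpos.ne'
        linarith
      have hvx : (g + c • f₁) x = e := by
        simp only [ZeroAtInftyContinuousMap.coe_add, ZeroAtInftyContinuousMap.coe_smul,
          Pi.add_apply, Pi.smul_apply]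
        rw [hgz, hwx, hf₁x]
        simp
      have hnle : ‖g + c • f₁‖ ≤ 1 := by
        refine c0_norm_le zero_le_one fun z => ?_
        by_cases hz : z ∈ K
        · have h1 : f₁ z = 0 := hf₁K z hz
          simp only [ZeroAtInftyContinuousMap.coe_add, ZeroAtInftyContinuousMap.coe_smul,
            Pi.add_apply, Pi.smul_apply, h1, smul_zero, add_zero]
          rw [hgz, norm_smul, hen, mul_one, Real.norm_eq_abs, abs_le]
          exact ⟨by linarith [(hw01 z).1], (hw01 z).2⟩
        · have h1 : g z = 0 := hgK z hz
          simp only [ZeroAtInftyContinuousMap.coe_add, ZeroAtInftyContinuousMap.coe_smul,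
            Pi.add_apply, Pi.smul_apply, h1, zero_add]
          rw [norm_smul, Real.norm_eq_abs]
          calc |c| * ‖f₁ z‖ ≤ |c| * ‖f₁‖ :=
                mul_le_mul_of_nonneg_left (c0_apply_le f₁ z) (abs_nonneg _)
            _ ≤ 1 := hcb
      have hnge : (1 : ℝ) ≤ ‖g + c • f₁‖ := by
        calc (1 : ℝ) = ‖(g + c • f₁) x‖ := by rw [hvx, hen]
          _ ≤ ‖g + c • f₁‖ := c0_apply_le _ x
      exact ⟨by rw [hvx]; exact hνe, le_antisymm hnle hnge⟩
    have hgS : g ∈ Sset x ν := by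
      have := hS 0 (by simpa using ht0.le)
      simpa using this
    have hTg := hμ g hgS
    obtain ⟨hTgμ, hTgn⟩ := hTg
    have hTgy : ‖T g y‖ = 1 := by
      refine le_antisymm (hTgn ▸ c0_apply_le (T g) y) ?_
      have h1 := μ.le_opNorm (T g y)
      rw [hμn, one_mul] at h1
      calc (1 : ℝ) = ‖μ (T g y)‖ := by rw [hTgμ]; simp
        _ ≤ ‖T g y‖ := h1
    have hSp := hμ _ (hS t (by rw [abs_of_pos ht0]))
    have hSm := hμ _ (hS (-t) (by rw [abs_neg, abs_of_pos ht0]))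
    obtain ⟨_, hpn⟩ := hSp
    obtain ⟨_, hmn⟩ := hSm
    have hap : ‖T (g + t • f₁) y‖ ≤ 1 := hpn ▸ c0_apply_le _ y
    have ham : ‖T (g + (-t) • f₁) y‖ ≤ 1 := hmn ▸ c0_apply_le _ y
    have hsumfun : (g + t • f₁) + (g + (-t) • f₁) = g + g := by
      module
    have hsum : T (g + t • f₁) y + T (g + (-t) • f₁) y = T g y + T g y := by
      have h1 : T (g + t • f₁) + T (g + (-t) • f₁) = T g + T g := by
        rw [← map_add, hsumfun, map_add]
      calc T (g + t • f₁) y + T (g + (-t) • f₁) y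
          = (T (g + t • f₁) + T (g + (-t) • f₁)) y := rfl
        _ = (T g + T g) y := by rw [h1]
        _ = T g y + T g y := rfl
    have h2 : ‖T (g + t • f₁) y + T (g + (-t) • f₁) y‖ = 2 := by
      rw [hsum, ← two_smul ℝ, norm_smul, hTgy]
      norm_num
    have htri := norm_add_le (T (g + t • f₁) y) (T (g + (-t) • f₁) y)
    rw [h2] at htri
    have hap1 : ‖T (g + t • f₁) y‖ = 1 := by linarith
    have ham1 : ‖T (g + (-t) • f₁) y‖ = 1 := by linarith
    have heq : T (g + t • f₁) y = T (g + (-t) • f₁) y :=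
      eq_of_norm_eq_of_norm_add_eq (hap1.trans ham1.symm)
        (by rw [h2, hap1, ham1]; norm_num)
    have hexp : ∀ c : ℝ, T (g + c • f₁) y = T g y + c • T f₁ y := by
      intro c
      rw [map_add, map_smul]
      rfl
    rw [hexp t, hexp (-t)] at heq
    have hzero : T f₁ y = 0 := by
      have h3 : t • T f₁ y = (-t) • T f₁ y := by
        have := add_left_cancel heq
        exact this
      have h4 : (2 * t) • T f₁ y = 0 := by
        have : t • T f₁ y + t • T f₁ y = 0 := by
          nth_rewrite 2 [h3]
          simp
        rw [two_mul, add_smul]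
        exact this
      rcases smul_eq_zero.mp h4 with h | h
      · exact absurd h (by positivity)
      · exact h
    have hfy : T f y = T m y := by
      have : f = f₁ + m := by rw [hf₁def]; abel
      rw [this, map_add]
      rw [ZeroAtInftyContinuousMap.add_apply, hzero, zero_add]
    have hmn : ‖m‖ ≤ ε := by
      refine c0_norm_le hε.le fun z => ?_
      by_cases hz : z ∈ U
      · rw [hmz, norm_smul, Real.norm_eq_abs]
        have h1 : |u z| ≤ 1 := abs_le.mpr ⟨by linarith [(hu01 z).1], (hu01 z).2⟩
        have h2 : ‖f z‖ ≤ ε := le_of_lt hz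
        calc |u z| * ‖f z‖ ≤ 1 * ε :=
              mul_le_mul h1 h2 (norm_nonneg _) zero_le_one
          _ = ε := one_mul _
      · rw [hmz, hu0 hz]
        simpa using hε.le
    calc ‖T f y‖ = ‖T m y‖ := by rw [hfy]
      _ ≤ ‖T m‖ := c0_apply_le _ y
      _ = ‖m‖ := T.norm_map m
      _ ≤ ε := hmn
  have hle : ‖T f y‖ ≤ 0 := le_of_forall_pos_le_add fun ε hε => by simpa using key ε hε
  exact norm_le_zero_iff.mp hle
end

section
/- Let X and Y be locally compact Hausdorff spaces, let E and F be real Banach spaces with F strictly convex, and let T : C₀(X,E) → C₀(Y,F) be a linear isometry. For each x ∈ X and each y ∈ Q_x, there exists a bounded linear operator h : E → F with ‖h‖ = 1 such that Tf(y) = h(f(x)) for every f ∈ C₀(X,E). -/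
open ZeroAtInfty

variable {X Y E F : Type*}
  [TopologicalSpace X] [LocallyCompactSpace X] [T2Space X]
  [TopologicalSpace Y] [LocallyCompactSpace Y] [T2Space Y]
  [NormedAddCommGroup E] [NormedSpace ℝ E] [CompleteSpace E]
  [NormedAddCommGroup F] [NormedSpace ℝ F] [CompleteSpace F]

/-! ### Auxiliary lemmas -/

lemma le_op_aux {G : Type*} [NormedAddCommGroup G] [NormedSpace ℝ G]
    (μ : G →L[ℝ] ℝ) (v : G) : μ v ≤ ‖μ‖ * ‖v‖ :=
  (le_abs_self _).trans (μ.le_opNorm v)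

lemma c0_apply_norm_le (g : C₀(Y, F)) (y : Y) : ‖g y‖ ≤ ‖g‖ := by
  rw [← ZeroAtInftyContinuousMap.norm_toBCF_eq_norm]
  exact g.toBCF.norm_coe_le_norm y

lemma c0_norm_le_s8 {g : C₀(X, E)} {C : ℝ} (hC : 0 ≤ C) (h : ∀ z, ‖g z‖ ≤ C) : ‖g‖ ≤ C := by
  rw [← ZeroAtInftyContinuousMap.norm_toBCF_eq_norm]
  exact (BoundedContinuousFunction.norm_le hC).2 h

/-- In a strictly convex space, a norm-one functional attains the value 1 at most at one point
of the closed unit ball. -/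
lemma strict_convex_uniq [StrictConvexSpace ℝ F] {μ : F →L[ℝ] ℝ} (hμ : ‖μ‖ = 1)
    {v w : F} (hv : ‖v‖ ≤ 1) (hw : ‖w‖ ≤ 1) (hv1 : μ v = 1) (hw1 : μ w = 1) : v = w := by
  have hμv : (1 : ℝ) ≤ ‖v‖ := by
    calc (1 : ℝ) = μ v := hv1.symm
    _ ≤ ‖μ‖ * ‖v‖ := le_op_aux μ v
    _ = ‖v‖ := by rw [hμ, one_mul]
  have hμw : (1 : ℝ) ≤ ‖w‖ := by
    calc (1 : ℝ) = μ w := hw1.symm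
    _ ≤ ‖μ‖ * ‖w‖ := le_op_aux μ w
    _ = ‖w‖ := by rw [hμ, one_mul]
  have hv' : ‖v‖ = 1 := le_antisymm hv hμv
  have hw' : ‖w‖ = 1 := le_antisymm hw hμw
  have hsum : ‖v + w‖ = ‖v‖ + ‖w‖ := by
    refine le_antisymm (norm_add_le _ _) ?_
    have : (2 : ℝ) = μ (v + w) := by rw [map_add, hv1, hw1]; norm_num
    calc ‖v‖ + ‖w‖ = 2 := by rw [hv', hw']; norm_num
    _ = μ (v + w) := this
    _ ≤ ‖μ‖ * ‖v + w‖ := le_op_aux μ _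
    _ = ‖v + w‖ := by rw [hμ, one_mul]
  exact eq_of_norm_eq_of_norm_add_eq (hv'.trans hw'.symm) hsum

/-- Multiplication of a `C₀` function by a continuous real function bounded by 1. -/
noncomputable def mulC (k : C(X, ℝ)) (hb : ∀ z, |k z| ≤ 1) (f : C₀(X, E)) : C₀(X, E) where
  toFun z := k z • f z
  continuous_toFun := k.continuous.smul (map_continuous f)
  zero_at_infty' := by
    have hf : Filter.Tendsto (fun z => ‖f z‖) (Filter.cocompact X) (nhds 0) :=
      tendsto_zero_iff_norm_tendsto_zero.mp (zero_at_infty f)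
    refine squeeze_zero_norm (fun z => ?_) hf
    rw [norm_smul]
    calc ‖k z‖ * ‖f z‖ ≤ 1 * ‖f z‖ := by
          apply mul_le_mul_of_nonneg_right _ (norm_nonneg _)
          simpa using hb z
    _ = ‖f z‖ := one_mul _

@[simp] lemma mulC_apply (k : C(X, ℝ)) (hb : ∀ z, |k z| ≤ 1) (f : C₀(X, E)) (z : X) :
    mulC k hb f z = k z • f z := rfl

/-- A compactly supported bump times a constant vector, as an element of `C₀`. -/
noncomputable def mulBump (k : C(X, ℝ)) (hk : HasCompactSupport (k : X → ℝ)) (e : E) :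
    C₀(X, E) where
  toFun z := k z • e
  continuous_toFun := k.continuous.smul continuous_const
  zero_at_infty' := by
    have : HasCompactSupport ((k : X → ℝ) • fun _ : X => e) := hk.smul_right
    exact this.is_zero_at_infty

@[simp] lemma mulBump_apply (k : C(X, ℝ)) (hk : HasCompactSupport (k : X → ℝ)) (e : E) (z : X) :
    mulBump k hk e z = k z • e := rfl

/-- Claim 4: for `y ∈ Q_x` there is a norm-one bounded linear operator `h : E → F` with
`Tf(y) = h(f(x))` for all `f ∈ C₀(X,E)`. -/
theorem exists_norm_one_operator [StrictConvexSpace ℝ F]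
    (T : C₀(X, E) →ₗᵢ[ℝ] C₀(Y, F)) {x : X} {y : Y} (hy : y ∈ Qset T x) :
    ∃ h : E →L[ℝ] F, ‖h‖ = 1 ∧ ∀ f : C₀(X, E), T f y = h (f x) := by
  rw [Qset, Set.mem_iUnion₂] at hy
  obtain ⟨ν, hν, ⟨f₀, hf₀⟩, μ, hμ, hTS⟩ := hy
  obtain ⟨hf₀ν, hf₀n⟩ := hf₀
  -- all elements of `S` are mapped to functions with the same value `u` at `y`
  set u : F := T f₀ y with hu
  have key : ∀ f ∈ Sset x ν, T f y = u := by
    intro f hf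
    have h1 := hTS f hf
    have h2 := hTS f₀ ⟨hf₀ν, hf₀n⟩
    refine strict_convex_uniq hμ ?_ ?_ h1.1 h2.1
    · calc ‖T f y‖ ≤ ‖T f‖ := c0_apply_norm_le _ _
      _ = 1 := h1.2
    · calc ‖T f₀ y‖ ≤ ‖T f₀‖ := c0_apply_norm_le _ _
      _ = 1 := h2.2
  have hun : ‖u‖ = 1 := by
    have h2 := hTS f₀ ⟨hf₀ν, hf₀n⟩
    refine le_antisymm ?_ ?_
    · calc ‖u‖ ≤ ‖T f₀‖ := c0_apply_norm_le _ _
      _ = 1 := h2.2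
    · calc (1 : ℝ) = μ u := h2.1.symm
      _ ≤ ‖μ‖ * ‖u‖ := le_op_aux μ u
      _ = ‖u‖ := by rw [hμ, one_mul]
  -- a convenient membership criterion for `Sset`
  have memS : ∀ g : C₀(X, E), ν (g x) = 1 → ‖g‖ ≤ 1 → g ∈ Sset x ν := by
    intro g h1 h2
    refine ⟨h1, le_antisymm h2 ?_⟩
    calc (1 : ℝ) = ν (g x) := h1.symm
    _ ≤ ‖ν‖ * ‖g x‖ := le_op_aux ν _
    _ = ‖g x‖ := by rw [hν, one_mul]
    _ ≤ ‖g‖ := c0_apply_norm_le _ _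
  -- key step: if `f x = 0` then `T f y = 0`
  have vanish : ∀ f : C₀(X, E), f x = 0 → T f y = 0 := by
    intro f hfx
    rcases eq_or_ne f 0 with rfl | hf0
    · simp
    have hfpos : (0 : ℝ) < ‖f‖ := norm_pos_iff.mpr hf0
    have hbound : ∀ ε : ℝ, 0 < ε → ‖T f y‖ ≤ ε := by
      intro ε hε
      set U : Set X := {z | ‖f z‖ < ε} with hU
      have hUopen : IsOpen U := isOpen_lt (continuous_norm.comp (map_continuous f)) continuous_const
      have hxU : x ∈ U := by simp [hU, hfx, hε]
      obtain ⟨k, hk1, hk0, hkc, hk01⟩ :=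
        exists_continuous_one_zero_of_isCompact (isCompact_singleton (x := x))
          hUopen.isClosed_compl (Set.disjoint_singleton_left.mpr (by simpa using hxU))
      have hkx : k x = 1 := hk1 rfl
      have hb : ∀ z, |k z| ≤ 1 := fun z => by
        rcases hk01 z with ⟨h0, h1⟩; rw [abs_le]; constructor <;> linarith
      have hb' : ∀ z, |(1 - k) z| ≤ 1 := fun z => by
        rcases hk01 z with ⟨h0, h1⟩
        simp only [ContinuousMap.sub_apply, ContinuousMap.one_apply]
        rw [abs_le]; constructor <;> linarith
      -- normalized f
      set fn : C₀(X, E) := ‖f‖⁻¹ • f with hfn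
      have hfn_le : ∀ z, ‖fn z‖ ≤ 1 := by
        intro z
        have : fn z = ‖f‖⁻¹ • f z := rfl
        rw [this, norm_smul, norm_inv, norm_norm]
        rw [inv_mul_le_iff₀ hfpos, mul_one]
        exact c0_apply_norm_le f z
      set g : C₀(X, E) := mulC k hb f₀ with hg
      set w : C₀(X, E) := mulC (1 - k) hb' fn with hw
      have hgx : ν (g x) = 1 := by
        simp only [hg, mulC_apply, hkx, one_smul, hf₀ν]
      have hwx : w x = 0 := by
        simp only [hw, mulC_apply, ContinuousMap.sub_apply, ContinuousMap.one_apply, hkx]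
        simp
      have hf₀le : ∀ z, ‖f₀ z‖ ≤ 1 := fun z => by
        calc ‖f₀ z‖ ≤ ‖f₀‖ := c0_apply_norm_le _ _
        _ = 1 := hf₀n
      have hgS : g ∈ Sset x ν := by
        refine memS g hgx (c0_norm_le_s8 zero_le_one fun z => ?_)
        rcases hk01 z with ⟨h0, h1⟩
        calc ‖g z‖ = |k z| * ‖f₀ z‖ := by rw [hg]; simp [mulC_apply, norm_smul]
        _ ≤ 1 * 1 := mul_le_mul (hb z) (hf₀le z) (norm_nonneg _) zero_le_one
        _ = 1 := one_mul 1
      have hgwS : g + w ∈ Sset x ν := by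
        refine memS _ (by simp [hgx, hwx]) (c0_norm_le_s8 zero_le_one fun z => ?_)
        rcases hk01 z with ⟨h0, h1⟩
        have e1 : ‖g z‖ ≤ k z := by
          calc ‖g z‖ = |k z| * ‖f₀ z‖ := by rw [hg]; simp [mulC_apply, norm_smul]
          _ ≤ |k z| * 1 := mul_le_mul_of_nonneg_left (hf₀le z) (abs_nonneg _)
          _ = k z := by rw [mul_one, abs_of_nonneg h0]
        have e2 : ‖w z‖ ≤ 1 - k z := by
          calc ‖w z‖ = |(1 - k) z| * ‖fn z‖ := by rw [hw]; simp [mulC_apply, norm_smul]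
          _ ≤ |(1 - k) z| * 1 := mul_le_mul_of_nonneg_left (hfn_le z) (abs_nonneg _)
          _ = 1 - k z := by
              rw [mul_one]
              simp only [ContinuousMap.sub_apply, ContinuousMap.one_apply]
              rw [abs_of_nonneg (by linarith)]
        calc ‖(g + w) z‖ = ‖g z + w z‖ := rfl
        _ ≤ ‖g z‖ + ‖w z‖ := norm_add_le _ _
        _ ≤ k z + (1 - k z) := add_le_add e1 e2
        _ = 1 := by ring
      -- deduce `T w y = 0`
      have hTw : T w y = 0 := by
        have e1 : T (g + w) y = u := key _ hgwS
        have e2 : T g y = u := key _ hgS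
        have : T (g + w) = T g + T w := by rw [map_add]
        rw [this] at e1
        have : T g y + T w y = u := e1
        rw [e2] at this
        exact by linear_combination (norm := abel_nf) this
      -- `fn = w + k • fn`, and `‖k • fn‖ ≤ ‖f‖⁻¹ * ε`
      set v : C₀(X, E) := mulC k hb fn with hv
      have hsplit : fn = w + v := by
        ext z
        simp only [hw, hv, mulC_apply, ZeroAtInftyContinuousMap.coe_add, Pi.add_apply,
          ContinuousMap.sub_apply, ContinuousMap.one_apply]
        rw [← add_smul]
        simp
      have hvnorm : ‖v‖ ≤ ‖f‖⁻¹ * ε := by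
        refine c0_norm_le_s8 (by positivity) fun z => ?_
        rcases eq_or_ne (k z) 0 with hkz | hkz
        · have hz0 : ‖v z‖ = 0 := by simp [hv, hkz]
          rw [hz0]; positivity
        · have hzU : z ∈ U := by
            by_contra hzU
            exact hkz (hk0 hzU)
          have : ‖f z‖ ≤ ε := le_of_lt hzU
          calc ‖v z‖ = |k z| * (‖f‖⁻¹ * ‖f z‖) := by
                rw [hv]; simp [mulC_apply, hfn, norm_smul]
          _ ≤ 1 * (‖f‖⁻¹ * ε) := by
              apply mul_le_mul (hb z) _ (by positivity) zero_le_one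
              exact mul_le_mul_of_nonneg_left this (by positivity)
          _ = ‖f‖⁻¹ * ε := one_mul _
      have hTfn : ‖T fn y‖ ≤ ‖f‖⁻¹ * ε := by
        have : T fn y = T v y := by
          rw [hsplit, map_add]
          show T w y + T v y = T v y
          rw [hTw, zero_add]
        rw [this]
        calc ‖T v y‖ ≤ ‖T v‖ := c0_apply_norm_le _ _
        _ = ‖v‖ := T.norm_map v
        _ ≤ ‖f‖⁻¹ * ε := hvnorm
      have hTf : T f = ‖f‖ • T fn := by
        rw [hfn, map_smul, smul_smul, mul_inv_cancel₀ (ne_of_gt hfpos), one_smul]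
      calc ‖T f y‖ = ‖f‖ * ‖T fn y‖ := by
            rw [hTf]
            show ‖(‖f‖ • T fn) y‖ = _
            rw [ZeroAtInftyContinuousMap.smul_apply, norm_smul, norm_norm]
      _ ≤ ‖f‖ * (‖f‖⁻¹ * ε) := mul_le_mul_of_nonneg_left hTfn (le_of_lt hfpos)
      _ = ε := by field_simp
    -- conclude
    by_contra hne
    have hpos : 0 < ‖T f y‖ := norm_pos_iff.mpr hne
    have := hbound (‖T f y‖ / 2) (by positivity)
    linarith
  -- fix a bump at x
  obtain ⟨k₀, hk₀1, -, hk₀c, hk₀01⟩ :=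
    exists_continuous_one_zero_of_isCompact (isCompact_singleton (x := x))
      isClosed_empty (Set.disjoint_empty _)
  have hk₀x : k₀ x = 1 := hk₀1 rfl
  -- define the operator
  set h₀ : E →ₗ[ℝ] F :=
    { toFun := fun e => T (mulBump k₀ hk₀c e) y
      map_add' := by
        intro e₁ e₂
        have : mulBump k₀ hk₀c (e₁ + e₂) = mulBump k₀ hk₀c e₁ + mulBump k₀ hk₀c e₂ := by
          ext z; simp [smul_add]
        show T (mulBump k₀ hk₀c (e₁ + e₂)) y = T (mulBump k₀ hk₀c e₁) y + T (mulBump k₀ hk₀c e₂) y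
        rw [this, map_add]; rfl
      map_smul' := by
        intro c e
        have : mulBump k₀ hk₀c (c • e) = c • mulBump k₀ hk₀c e := by
          ext z
          show k₀ z • (c • e) = c • (k₀ z • e)
          rw [smul_comm]
        show T (mulBump k₀ hk₀c (c • e)) y = c • T (mulBump k₀ hk₀c e) y
        rw [this, map_smul]; rfl } with hh₀
  have hbound : ∀ e : E, ‖h₀ e‖ ≤ 1 * ‖e‖ := by
    intro e
    have : ‖mulBump k₀ hk₀c e‖ ≤ ‖e‖ := by
      refine c0_norm_le_s8 (norm_nonneg e) fun z => ?_
      rcases hk₀01 z with ⟨h0, h1⟩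
      calc ‖mulBump k₀ hk₀c e z‖ = |k₀ z| * ‖e‖ := by simp [norm_smul]
      _ ≤ 1 * ‖e‖ := mul_le_mul_of_nonneg_right (abs_le.mpr ⟨by linarith, h1⟩) (norm_nonneg _)
      _ = ‖e‖ := one_mul _
    calc ‖h₀ e‖ ≤ ‖T (mulBump k₀ hk₀c e)‖ := c0_apply_norm_le _ _
    _ = ‖mulBump k₀ hk₀c e‖ := T.norm_map _
    _ ≤ ‖e‖ := this
    _ = 1 * ‖e‖ := (one_mul _).symm
  set h : E →L[ℝ] F := LinearMap.mkContinuous h₀ 1 hbound with hh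
  have hmain : ∀ f : C₀(X, E), T f y = h (f x) := by
    intro f
    have hzero : (f - mulBump k₀ hk₀c (f x)) x = 0 := by
      show f x - k₀ x • f x = 0
      rw [hk₀x, one_smul, sub_self]
    have := vanish _ hzero
    rw [map_sub] at this
    have : T f y - T (mulBump k₀ hk₀c (f x)) y = 0 := this
    have : T f y = T (mulBump k₀ hk₀c (f x)) y := by linear_combination (norm := abel_nf) this
    exact this
  refine ⟨h, ?_, hmain⟩
  refine le_antisymm (LinearMap.mkContinuous_norm_le h₀ zero_le_one hbound) ?_
  -- lower bound: use f₀
  have h1 : h (f₀ x) = u := by rw [← hmain f₀]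
  have h2 : ‖f₀ x‖ ≤ 1 := by
    calc ‖f₀ x‖ ≤ ‖f₀‖ := c0_apply_norm_le _ _
    _ = 1 := hf₀n
  have : (1 : ℝ) = ‖h (f₀ x)‖ := by rw [h1, hun]
  calc (1 : ℝ) = ‖h (f₀ x)‖ := this
  _ ≤ ‖h‖ * ‖f₀ x‖ := h.le_opNorm _
  _ ≤ ‖h‖ * 1 := mul_le_mul_of_nonneg_left h2 (norm_nonneg _)
  _ = ‖h‖ := mul_one _
end

section
/- Let X and Y be locally compact Hausdorff spaces, let E and F be real Banach spaces with F strictly convex, and let T : C₀(X,E) → C₀(Y,F) be a linear isometry. Set Y₁ = ⋃_{x ∈ X} Q_x (a subset of Y with the subspace topology), and let φ : Y₁ → X be a map satisfying y ∈ Q_{φ(y)} for every y ∈ Y₁. Then φ is continuous. -/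
open ZeroAtInfty

variable {X Y E F : Type*}
  [TopologicalSpace X] [LocallyCompactSpace X] [T2Space X]
  [TopologicalSpace Y] [LocallyCompactSpace Y] [T2Space Y]
  [NormedAddCommGroup E] [NormedSpace ℝ E] [CompleteSpace E]
  [NormedAddCommGroup F] [NormedSpace ℝ F] [CompleteSpace F]

/- ### Auxiliary lemmas -/

open Filter Topology Set

/-- Multiplying a compactly supported continuous scalar function with a continuous map gives
an element of `C₀`. -/
noncomputable def smulC0 {X E : Type*} [TopologicalSpace X] [NormedAddCommGroup E]
    [NormedSpace ℝ E] (u : C(X, ℝ)) (hu : HasCompactSupport u) (f : C(X, E)) : C₀(X, E) where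
  toFun := fun p => u p • f p
  continuous_toFun := u.continuous.smul f.continuous
  zero_at_infty' := by
    refine Filter.Tendsto.congr' ?_ (tendsto_const_nhds (x := (0 : E)) (f := Filter.cocompact X))
    have h1 : (tsupport u)ᶜ ∈ Filter.cocompact X :=
      Filter.mem_cocompact.mpr ⟨tsupport u, hu, le_refl _⟩
    filter_upwards [h1] with p hp
    simp [image_eq_zero_of_notMem_tsupport hp]

@[simp] lemma smulC0_apply {X E : Type*} [TopologicalSpace X] [NormedAddCommGroup E]
    [NormedSpace ℝ E] (u : C(X, ℝ)) (hu : HasCompactSupport u) (f : C(X, E)) (p : X) :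
    smulC0 u hu f p = u p • f p := rfl

lemma normC0_le_of_forall {α β : Type*} [TopologicalSpace α] [SeminormedAddCommGroup β]
    {f : C₀(α, β)} {C : ℝ} (hC : 0 ≤ C) (h : ∀ p, ‖f p‖ ≤ C) : ‖f‖ ≤ C := by
  rw [← ZeroAtInftyContinuousMap.norm_toBCF_eq_norm]
  exact (BoundedContinuousFunction.norm_le hC).mpr (fun p => h p)

lemma normC0_apply_le {α β : Type*} [TopologicalSpace α] [SeminormedAddCommGroup β]
    (f : C₀(α, β)) (p : α) : ‖f p‖ ≤ ‖f‖ := by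
  rw [← ZeroAtInftyContinuousMap.norm_toBCF_eq_norm]
  exact f.toBCF.norm_coe_le_norm p

/-- In a strictly convex space, the face determined by a norm-one functional contains at most
one point of the closed unit ball. -/
lemma face_unique {F : Type*} [NormedAddCommGroup F] [NormedSpace ℝ F] [StrictConvexSpace ℝ F]
    {μ : F →L[ℝ] ℝ} (hμ : ‖μ‖ = 1) {u v : F} (hu : ‖u‖ ≤ 1) (hv : ‖v‖ ≤ 1)
    (hμu : μ u = 1) (hμv : μ v = 1) : u = v := by
  have h2 : (2 : ℝ) ≤ ‖u + v‖ := by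
    have h := μ.le_opNorm (u + v)
    have h' : μ (u + v) = 2 := by rw [map_add, hμu, hμv]; norm_num
    calc (2 : ℝ) = μ (u + v) := h'.symm
      _ ≤ ‖μ (u + v)‖ := le_abs_self _
      _ ≤ ‖μ‖ * ‖u + v‖ := h
      _ = ‖u + v‖ := by rw [hμ, one_mul]
  have hu1 : ‖u‖ = 1 := le_antisymm hu (by nlinarith [norm_add_le u v])
  have hv1 : ‖v‖ = 1 := le_antisymm hv (by nlinarith [norm_add_le u v])
  refine eq_of_norm_eq_of_norm_add_eq (hu1.trans hv1.symm) ?_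
  have := norm_add_le u v
  rw [hu1, hv1]; linarith

lemma mem_Sset_of {x : X} {ν : E →L[ℝ] ℝ} (hν : ‖ν‖ = 1) {h : C₀(X, E)}
    (h1 : ν (h x) = 1) (h2 : ∀ p, ‖h p‖ ≤ 1) : h ∈ Sset x ν := by
  refine ⟨h1, le_antisymm (normC0_le_of_forall zero_le_one h2) ?_⟩
  calc (1 : ℝ) = ν (h x) := h1.symm
    _ ≤ ‖ν (h x)‖ := le_abs_self _
    _ ≤ ‖ν‖ * ‖h x‖ := ν.le_opNorm _
    _ = ‖h x‖ := by rw [hν, one_mul]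
    _ ≤ ‖h‖ := normC0_apply_le h x

/-- The key lemma: if `y' ∈ Q_{x'}` and `f` is a norm-at-most-one function vanishing at `x'`,
then `(Tf)(y')` has norm at most `ε` for every positive `ε`. -/
lemma key_estimate [StrictConvexSpace ℝ F] (T : C₀(X, E) →ₗᵢ[ℝ] C₀(Y, F))
    {x' : X} {y' : Y} (hy' : y' ∈ Qset T x') {f : C₀(X, E)} (hf1 : ‖f‖ ≤ 1)
    (hfx : f x' = 0) {ε : ℝ} (hε : 0 < ε) : ‖(T f) y'‖ ≤ ε := by
  obtain ⟨ν', ⟨g, hg⟩, hν', μ', hμ', hsub⟩ : ∃ ν' : E →L[ℝ] ℝ,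
      (Sset x' ν').Nonempty ∧ ‖ν'‖ = 1 ∧ ∃ μ' : F →L[ℝ] ℝ, ‖μ'‖ = 1 ∧
        ∀ f ∈ Sset x' ν', T f ∈ Rset y' μ' := by
    simpa [Qset, Qnu, Set.mem_iUnion, and_assoc] using hy'
  -- the neighbourhood where `f` is small
  set U : Set X := {p | ‖f p‖ < ε} with hU
  have hUopen : IsOpen U := isOpen_lt (continuous_norm.comp (map_continuous f)) continuous_const
  have hxU : x' ∈ U := by simp [hU, hfx, hε]
  -- a bump function at `x'` supported in `U`
  obtain ⟨w, hw1, hw0, hwc, hwi⟩ := exists_continuous_one_zero_of_isCompact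
    (isCompact_singleton (x := x')) hUopen.isClosed_compl
    (Set.disjoint_left.mpr (by rintro p rfl; simpa using hxU))
  have hwx : w x' = 1 := hw1 rfl
  set e' : E := g x' with he'
  have hνe : ν' e' = 1 := hg.1
  have he1 : ‖e'‖ ≤ 1 := by
    calc ‖e'‖ ≤ ‖g‖ := normC0_apply_le g x'
      _ = 1 := hg.2
  set g₁ : C₀(X, E) := smulC0 w hwc (ContinuousMap.const X e') with hg₁
  set wf : C₀(X, E) := smulC0 w hwc (f : C(X, E)) with hwf
  have hwfap : ∀ p, wf p = w p • f p := fun p => rfl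
  have hg₁ap : ∀ p, g₁ p = w p • e' := fun p => rfl
  set h : C₀(X, E) := g₁ + f - wf with hh
  have hhap : ∀ p, h p = w p • e' + (1 - w p) • f p := by
    intro p
    have : h p = g₁ p + f p - wf p := rfl
    rw [this, hg₁ap, hwfap, sub_smul, one_smul]
    abel
  -- `g₁` and `h` belong to `S_{x',ν'}`
  have hg₁S : g₁ ∈ Sset x' ν' := by
    refine mem_Sset_of hν' ?_ ?_
    · rw [hg₁ap, hwx, one_smul, hνe]
    · intro p
      rw [hg₁ap, norm_smul]
      have := (hwi p).1
      have := (hwi p).2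
      calc ‖w p‖ * ‖e'‖ ≤ 1 * 1 := by
            apply mul_le_mul _ he1 (norm_nonneg _) zero_le_one
            rw [Real.norm_eq_abs, abs_of_nonneg (hwi p).1]; exact (hwi p).2
        _ = 1 := one_mul 1
  have hhS : h ∈ Sset x' ν' := by
    refine mem_Sset_of hν' ?_ ?_
    · rw [hhap, hwx, one_smul, hfx, smul_zero, add_zero, hνe]
    · intro p
      rw [hhap]
      have hw0' : (0:ℝ) ≤ w p := (hwi p).1
      have hw1' : w p ≤ 1 := (hwi p).2
      have hfp : ‖f p‖ ≤ 1 := le_trans (normC0_apply_le f p) hf1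
      calc ‖w p • e' + (1 - w p) • f p‖ ≤ ‖w p • e'‖ + ‖(1 - w p) • f p‖ := norm_add_le _ _
        _ = ‖w p‖ * ‖e'‖ + ‖(1 - w p)‖ * ‖f p‖ := by rw [norm_smul, norm_smul]
        _ ≤ w p * 1 + (1 - w p) * 1 := by
            apply add_le_add
            · rw [Real.norm_eq_abs, abs_of_nonneg hw0']
              exact mul_le_mul_of_nonneg_left he1 hw0'
            · rw [Real.norm_eq_abs, abs_of_nonneg (by linarith)]
              exact mul_le_mul_of_nonneg_left hfp (by linarith)
        _ = 1 := by ring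
  -- hence their images under `T` agree at `y'`
  have hRg₁ := hsub g₁ hg₁S
  have hRh := hsub h hhS
  have hTg₁le : ‖(T g₁) y'‖ ≤ 1 := le_trans (normC0_apply_le _ _) (le_of_eq hRg₁.2)
  have hThle : ‖(T h) y'‖ ≤ 1 := le_trans (normC0_apply_le _ _) (le_of_eq hRh.2)
  have heq : (T h) y' = (T g₁) y' := face_unique hμ' hThle hTg₁le hRh.1 hRg₁.1
  -- therefore `(T f) y' = (T wf) y'`
  have hTfw : (T f) y' = (T wf) y' := by
    have h1 : h - g₁ = f - wf := by rw [hh]; abel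
    have h2 : (T (h - g₁)) y' = 0 := by
      rw [map_sub]
      show (T h) y' - (T g₁) y' = 0
      rw [heq, sub_self]
    rw [h1, map_sub] at h2
    have : (T f) y' - (T wf) y' = 0 := h2
    exact sub_eq_zero.mp this
  -- and `‖wf‖ ≤ ε` since `w` is supported where `f` is small
  rw [hTfw]
  calc ‖(T wf) y'‖ ≤ ‖T wf‖ := normC0_apply_le _ _
    _ = ‖wf‖ := T.norm_map wf
    _ ≤ ε := by
        refine normC0_le_of_forall hε.le fun p => ?_
        rw [hwfap, norm_smul]
        by_cases hp : p ∈ U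
        · have h1 : ‖w p‖ ≤ 1 := by
            rw [Real.norm_eq_abs, abs_of_nonneg (hwi p).1]; exact (hwi p).2
          have h2 : ‖f p‖ ≤ ε := le_of_lt hp
          calc ‖w p‖ * ‖f p‖ ≤ 1 * ε := mul_le_mul h1 h2 (norm_nonneg _) zero_le_one
            _ = ε := one_mul ε
        · rw [hw0 hp]
          simpa using hε.le

/-- Claim 5: the map `φ : Y₁ → X` determined by `y ∈ Q_{φ(y)}` is continuous. -/
theorem phi_continuous [StrictConvexSpace ℝ F]
    (T : C₀(X, E) →ₗᵢ[ℝ] C₀(Y, F))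
    (φ : (⋃ x : X, Qset T x : Set Y) → X)
    (hφ : ∀ y : (⋃ x : X, Qset T x : Set Y), y.1 ∈ Qset T (φ y)) :
    Continuous φ := by
  rw [continuous_iff_continuousAt]
  intro y₀
  rw [ContinuousAt, (nhds_basis_opens (φ y₀)).tendsto_right_iff]
  rintro V ⟨hxV, hVopen⟩
  obtain ⟨ν, ⟨f₀, hf₀⟩, hν, μ, hμ, hsub⟩ : ∃ ν : E →L[ℝ] ℝ,
      (Sset (φ y₀) ν).Nonempty ∧ ‖ν‖ = 1 ∧ ∃ μ : F →L[ℝ] ℝ, ‖μ‖ = 1 ∧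
        ∀ f ∈ Sset (φ y₀) ν, T f ∈ Rset y₀.1 μ := by
    simpa [Qset, Qnu, Set.mem_iUnion, and_assoc] using hφ y₀
  -- a bump at `φ y₀` supported in `V`
  obtain ⟨u, hu1, hu0, huc, hui⟩ := exists_continuous_one_zero_of_isCompact
    (isCompact_singleton (x := φ y₀)) hVopen.isClosed_compl
    (Set.disjoint_left.mpr (by rintro p rfl; simpa using hxV))
  set e : E := f₀ (φ y₀) with he
  have hνe : ν e = 1 := hf₀.1
  have he1 : ‖e‖ ≤ 1 := by
    calc ‖e‖ ≤ ‖f₀‖ := normC0_apply_le f₀ _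
      _ = 1 := hf₀.2
  set f : C₀(X, E) := smulC0 u huc (ContinuousMap.const X e) with hf
  have hfap : ∀ p, f p = u p • e := fun p => rfl
  have hfS : f ∈ Sset (φ y₀) ν := by
    refine mem_Sset_of hν ?_ ?_
    · have hux : u (φ y₀) = 1 := hu1 rfl
      rw [hfap, hux, one_smul, hνe]
    · intro p
      rw [hfap, norm_smul]
      calc ‖u p‖ * ‖e‖ ≤ 1 * 1 := by
            apply mul_le_mul _ he1 (norm_nonneg _) zero_le_one
            rw [Real.norm_eq_abs, abs_of_nonneg (hui p).1]; exact (hui p).2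
        _ = 1 := one_mul 1
  -- `T f` has norm `1` at `y₀`
  have hRf := hsub f hfS
  have hTfy₀ : (1 : ℝ) ≤ ‖(T f) y₀.1‖ := by
    calc (1 : ℝ) = μ ((T f) y₀.1) := hRf.1.symm
      _ ≤ ‖μ ((T f) y₀.1)‖ := le_abs_self _
      _ ≤ ‖μ‖ * ‖(T f) y₀.1‖ := μ.le_opNorm _
      _ = ‖(T f) y₀.1‖ := by rw [hμ, one_mul]
  -- the open set where `‖T f‖ > 1/2`
  set W : Set Y := {y' | 1 / 2 < ‖(T f) y'‖} with hW
  have hWopen : IsOpen W := isOpen_lt continuous_const (continuous_norm.comp (map_continuous (T f)))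
  have hy₀W : y₀ ∈ Subtype.val ⁻¹' W := by
    show (1 : ℝ) / 2 < ‖(T f) y₀.1‖
    linarith
  filter_upwards [(hWopen.preimage continuous_subtype_val).mem_nhds hy₀W] with z hz
  by_contra hzV
  -- if `φ z ∉ V` then `f (φ z) = 0`, contradicting `‖(T f) z‖ > 1/2`
  have hfz : f (φ z) = 0 := by
    have huz : u (φ z) = 0 := hu0 hzV
    rw [hfap, huz, zero_smul]
  have := key_estimate T (hφ z) (le_of_eq hfS.2) hfz (by norm_num : (0:ℝ) < 1/2)
  have hz' : (1 : ℝ) / 2 < ‖(T f) z.1‖ := hz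
  linarith
end
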